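/- arXiv:2306.04258 — 3 statements merged into one kernel-verified Lean document; each statement's English description precedes it below -/
import Mathlib

section
/- Let g > 0 and let b₁ > b₂ > b₃ > 0 be real numbers. Then 2πg ∫₀^∞ ((s+b₁²)(s+b₂²)(s+b₃²))^(−1/2) ds = (4πg/√(b₁²−b₃²))·F( arccos(b₃/b₁) | (b₁²−b₂²)/(b₁²−b₃²) ); here arccos(b₃/b₁) ∈ (0, π/2) and the parameter (b₁²−b₂²)/(b₁²−b₃²) lies in (0,1), so the right-hand side is defined. Equivalently, the self-gravitational potential V = −2πg ∫₀^∞ ((s+b₁²)(s+b₂²)(s+b₃²))^(−1/2) ds of the ellipsoid with semi-axes b₁, b₂, b₃ equals −(4πg/√(b₁²−b₃²))·F( arccos(b₃/b₁) | (b₁²−b₂²)/(b₁²−b₃²) ). -/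
open Real MeasureTheory

/-- Incomplete elliptic integral of the first kind, `F(φ|m)` (Mathematica convention). -/
noncomputable def ellF (φ m : ℝ) : ℝ :=
  ∫ θ in (0:ℝ)..φ, (1 - m * Real.sin θ ^ 2) ^ (-(1:ℝ)/2)

/-!
The substitution `s + b₁² = (b₁² - b₃²) / sin² θ` maps `θ ∈ (0, arccos (b₃/b₁))` decreasingly
onto `s ∈ (0, ∞)`. Under it `s + b₃² = (b₁² - b₃²) cos² θ / sin² θ`,
`s + b₂² = (b₁² - b₃²) (1 - m sin² θ) / sin² θ` with `m = (b₁² - b₂²) / (b₁² - b₃²)`, and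
`|ds| = 2 (b₁² - b₃²) cos θ / sin³ θ dθ`, so the integrand becomes
`2 / √(b₁² - b₃²) · (1 - m sin² θ)^(-1/2)`.
-/

open Set

lemma rpow_neg_one_half_eq_inv_sqrt {x : ℝ} (hx : 0 ≤ x) : x ^ (-(1:ℝ)/2) = (√x)⁻¹ := by
  rw [neg_div, rpow_neg hx, ← sqrt_eq_rpow]

lemma strictAntiOn_div_sin_sq {A : ℝ} (hA : 0 < A) :
    StrictAntiOn (fun θ => A / sin θ ^ 2) (Ioc 0 (π / 2)) := by
  intro x hx y hy hxy
  have hsx : 0 < sin x := sin_pos_of_pos_of_lt_pi hx.1 (by linarith [hx.2, pi_pos])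
  have hsin : sin x < sin y :=
    strictMonoOn_sin ⟨by linarith [hx.1, pi_pos], hx.2⟩ ⟨by linarith [hy.1, pi_pos], hy.2⟩ hxy
  exact div_lt_div_of_pos_left hA (by positivity) (pow_lt_pow_left₀ hsin hsx.le two_ne_zero)

lemma image_div_sin_sq_Ioo {A φ : ℝ} (hA : 0 < A) (hφ : φ ∈ Ioc 0 (π / 2)) :
    (fun θ => A / sin θ ^ 2) '' Ioo 0 φ = Ioi (A / sin φ ^ 2) := by
  have hsφ : 0 < sin φ := sin_pos_of_pos_of_lt_pi hφ.1 (by linarith [hφ.2, pi_pos])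
  refine Subset.antisymm ?_ fun y hy => ?_
  · rintro _ ⟨θ, hθ, rfl⟩
    exact strictAntiOn_div_sin_sq hA ⟨hθ.1, hθ.2.le.trans hφ.2⟩ hφ hθ.2
  · have hy0 : 0 < y := (by positivity : 0 < A / sin φ ^ 2).trans hy
    have hAy : A / y < sin φ ^ 2 := by
      rwa [div_lt_iff₀ hy0, ← div_lt_iff₀' (by positivity)]
    set t := √(A / y)
    have ht0 : 0 < t := sqrt_pos.2 (div_pos hA hy0)
    have htφ : t < sin φ := (sqrt_lt' hsφ).2 hAy
    have hsin : sin (arcsin t) = t := sin_arcsin (by linarith) (htφ.le.trans (sin_le_one φ))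
    refine ⟨arcsin t, ⟨arcsin_pos.2 ht0,
      (arcsin_lt_iff_lt_sin' ⟨by linarith [hφ.1, pi_pos], hφ.2⟩).2 htφ⟩, ?_⟩
    simp only [hsin, t, sq_sqrt (div_pos hA hy0).le]
    field_simp

lemma hasDerivAt_div_sin_sq_sub (A p : ℝ) {θ : ℝ} (hθ : sin θ ≠ 0) :
    HasDerivAt (fun θ => A / sin θ ^ 2 - p) (-(2 * A * cos θ / sin θ ^ 3)) θ := by
  refine ((hasDerivAt_const θ A).fun_div ((hasDerivAt_sin θ).fun_pow 2)
    (pow_ne_zero 2 hθ)).sub_const p |>.congr_deriv ?_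
  field_simp
  ring

theorem integral_Ioi_eq_integral_Ioo_div_sin_sq {E : Type*} [NormedAddCommGroup E]
    [NormedSpace ℝ E] (g : ℝ → E) {A φ : ℝ} (hA : 0 < A) (hφ : φ ∈ Ioc 0 (π / 2)) (p : ℝ) :
    ∫ s in Ioi (A / sin φ ^ 2 - p), g s =
      ∫ θ in Ioo 0 φ, (2 * A * cos θ / sin θ ^ 3) • g (A / sin θ ^ 2 - p) := by
  set f := fun θ => A / sin θ ^ 2 - p
  have hsin : ∀ θ ∈ Ioo 0 φ, 0 < sin θ := fun θ hθ =>
    sin_pos_of_pos_of_lt_pi hθ.1 (by linarith [hθ.2, hφ.2, pi_pos])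
  have himage : f '' Ioo 0 φ = Ioi (A / sin φ ^ 2 - p) := by
    rw [show f = (· - p) ∘ fun θ => A / sin θ ^ 2 from rfl, image_comp,
      image_div_sin_sq_Ioo hA hφ, image_sub_const_Ioi]
  have hinj : InjOn f (Ioo 0 φ) := fun x hx y hy hxy =>
    (strictAntiOn_div_sin_sq hA).injOn ⟨hx.1, hx.2.le.trans hφ.2⟩ ⟨hy.1, hy.2.le.trans hφ.2⟩
      (sub_left_inj.1 hxy)
  rw [← himage, integral_image_eq_integral_abs_deriv_smul measurableSet_Ioo
    (fun θ hθ => (hasDerivAt_div_sin_sq_sub A p (hsin θ hθ).ne').hasDerivWithinAt) hinj]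
  refine setIntegral_congr_fun measurableSet_Ioo fun θ hθ => ?_
  have hcos : 0 < cos θ := cos_pos_of_mem_Ioo ⟨by linarith [hθ.1, pi_pos], hθ.2.trans_le hφ.2⟩
  have hsinθ := hsin θ hθ
  rw [abs_neg, abs_of_pos (by positivity)]

lemma mul_rpow_neg_half_div_sin_sq {a b c θ : ℝ} (hca : c < a) (hcb : c < b)
    (hsin : 0 < sin θ) (hcos : 0 < cos θ) :
    2 * (a - c) * cos θ / sin θ ^ 3 *
        (((a - c) / sin θ ^ 2 - a + a) * ((a - c) / sin θ ^ 2 - a + b) *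
          ((a - c) / sin θ ^ 2 - a + c)) ^ (-(1:ℝ)/2) =
      2 / √(a - c) * (1 - (a - b) / (a - c) * sin θ ^ 2) ^ (-(1:ℝ)/2) := by
  set S := sin θ
  set C := cos θ
  set D := 1 - (a - b) / (a - c) * S ^ 2
  have hA : 0 < a - c := sub_pos.2 hca
  have hS1 : S ^ 2 ≤ 1 := sin_sq_le_one θ
  have hD : 0 < D := by
    have : D = (1 - S ^ 2) + S ^ 2 * ((b - c) / (a - c)) := by simp only [D]; field_simp; ring
    rw [this]
    nlinarith [mul_pos (pow_pos hsin 2) (div_pos (sub_pos.2 hcb) hA)]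
  have hC : C ^ 2 = 1 - S ^ 2 := by rw [← sin_sq_add_cos_sq θ]; ring
  have hprod : ((a - c) / S ^ 2 - a + a) * ((a - c) / S ^ 2 - a + b) * ((a - c) / S ^ 2 - a + c)
      = ((a - c) * C * √(a - c) * √D / S ^ 3) ^ 2 := by
    rw [div_pow, mul_pow, mul_pow, mul_pow, sq_sqrt hA.le, sq_sqrt hD.le, hC]
    simp only [D]
    field_simp
    ring
  rw [hprod, rpow_neg_one_half_eq_inv_sqrt (sq_nonneg _), sqrt_sq (by positivity),
    rpow_neg_one_half_eq_inv_sqrt hD.le]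
  have hsqrtA := sqrt_pos.2 hA
  have hsqrtD := sqrt_pos.2 hD
  field_simp

theorem integral_Ioi_rpow_neg_half_eq_ellF {b1 b2 b3 : ℝ} (h3 : 0 ≤ b3) (h32 : b3 < b2)
    (h31 : b3 < b1) :
    ∫ s in Ioi (0:ℝ), ((s + b1 ^ 2) * (s + b2 ^ 2) * (s + b3 ^ 2)) ^ (-(1:ℝ)/2) =
      2 / √(b1 ^ 2 - b3 ^ 2) * ellF (arccos (b3 / b1)) ((b1 ^ 2 - b2 ^ 2) / (b1 ^ 2 - b3 ^ 2)) := by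
  have hb1 : 0 < b1 := h3.trans_lt h31
  have hA : b3 ^ 2 < b1 ^ 2 := pow_lt_pow_left₀ h31 h3 two_ne_zero
  have hB : b3 ^ 2 < b2 ^ 2 := pow_lt_pow_left₀ h32 h3 two_ne_zero
  set φ := arccos (b3 / b1)
  have hφ : φ ∈ Ioc 0 (π / 2) :=
    ⟨arccos_pos.2 ((div_lt_one hb1).2 h31), arccos_le_pi_div_two.2 (div_nonneg h3 hb1.le)⟩
  have hsinφ : sin φ ^ 2 = (b1 ^ 2 - b3 ^ 2) / b1 ^ 2 := by
    rw [sin_arccos, sq_sqrt (by rw [div_pow, sub_nonneg, div_le_one (by positivity)]; linarith)]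
    field_simp
  have hlower : (b1 ^ 2 - b3 ^ 2) / sin φ ^ 2 - b1 ^ 2 = 0 := by
    rw [hsinφ]
    field_simp [(sub_pos.2 hA).ne']
    ring
  rw [← hlower, integral_Ioi_eq_integral_Ioo_div_sin_sq _ (sub_pos.2 hA) hφ, ellF,
    intervalIntegral.integral_of_le hφ.1.le, integral_Ioc_eq_integral_Ioo, ← integral_const_mul]
  refine setIntegral_congr_fun measurableSet_Ioo fun θ hθ => ?_
  rw [smul_eq_mul]
  exact mul_rpow_neg_half_div_sin_sq hA hB
    (sin_pos_of_pos_of_lt_pi hθ.1 (by linarith [hθ.2, hφ.2, pi_pos]))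
    (cos_pos_of_mem_Ioo ⟨by linarith [hθ.1, pi_pos], hθ.2.trans_le hφ.2⟩)

theorem stmt_2_general (g b1 b2 b3 : ℝ) (h21 : b2 < b1) (h32 : b3 < b2) (h3 : 0 < b3) :
    Real.arccos (b3 / b1) ∈ Set.Ioo 0 (π / 2) ∧
    (b1 ^ 2 - b2 ^ 2) / (b1 ^ 2 - b3 ^ 2) ∈ Set.Ioo (0:ℝ) 1 ∧
    2 * π * g * ∫ s in Set.Ioi (0:ℝ), ((s + b1 ^ 2) * (s + b2 ^ 2) * (s + b3 ^ 2)) ^ (-(1:ℝ)/2)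
      = 4 * π * g / Real.sqrt (b1 ^ 2 - b3 ^ 2) *
          ellF (Real.arccos (b3 / b1)) ((b1 ^ 2 - b2 ^ 2) / (b1 ^ 2 - b3 ^ 2)) ∧
    -(2 * π * g * ∫ s in Set.Ioi (0:ℝ),
        ((s + b1 ^ 2) * (s + b2 ^ 2) * (s + b3 ^ 2)) ^ (-(1:ℝ)/2))
      = -(4 * π * g / Real.sqrt (b1 ^ 2 - b3 ^ 2) *
          ellF (Real.arccos (b3 / b1)) ((b1 ^ 2 - b2 ^ 2) / (b1 ^ 2 - b3 ^ 2))) := by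
  have hb1 : 0 < b1 := h3.trans (h32.trans h21)
  have hA : b3 ^ 2 < b1 ^ 2 := pow_lt_pow_left₀ (h32.trans h21) h3.le two_ne_zero
  have hB : b2 ^ 2 < b1 ^ 2 := pow_lt_pow_left₀ h21 (h3.trans h32).le two_ne_zero
  have hBA : b1 ^ 2 - b2 ^ 2 < b1 ^ 2 - b3 ^ 2 := by nlinarith
  have hmain := integral_Ioi_rpow_neg_half_eq_ellF h3.le h32 (h32.trans h21)
  refine ⟨⟨arccos_pos.2 ((div_lt_one hb1).2 (h32.trans h21)), arccos_lt_pi_div_two.2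
    (div_pos h3 hb1)⟩, ⟨div_pos (sub_pos.2 hB) (sub_pos.2 hA), (div_lt_one (sub_pos.2 hA)).2 hBA⟩,
    ?_, ?_⟩ <;> rw [hmain] <;> ring

/-- For `g > 0` and `b₁ > b₂ > b₃ > 0`,
`2πg ∫₀^∞ ((s+b₁²)(s+b₂²)(s+b₃²))^(−1/2) ds
  = (4πg/√(b₁²−b₃²))·F(arccos(b₃/b₁) | (b₁²−b₂²)/(b₁²−b₃²))`;
moreover `arccos(b₃/b₁) ∈ (0,π/2)` and the parameter lies in `(0,1)`.  Equivalently, the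
self-gravitational potential `V` (the negative of the left-hand side) equals the negative
of the right-hand side. -/
theorem stmt_2 (g b1 b2 b3 : ℝ) (hg : 0 < g) (h21 : b2 < b1) (h32 : b3 < b2) (h3 : 0 < b3) :
    Real.arccos (b3 / b1) ∈ Set.Ioo 0 (π / 2) ∧
    (b1 ^ 2 - b2 ^ 2) / (b1 ^ 2 - b3 ^ 2) ∈ Set.Ioo (0:ℝ) 1 ∧
    2 * π * g * ∫ s in Set.Ioi (0:ℝ), ((s + b1 ^ 2) * (s + b2 ^ 2) * (s + b3 ^ 2)) ^ (-(1:ℝ)/2)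
      = 4 * π * g / Real.sqrt (b1 ^ 2 - b3 ^ 2) *
          ellF (Real.arccos (b3 / b1)) ((b1 ^ 2 - b2 ^ 2) / (b1 ^ 2 - b3 ^ 2)) ∧
    -(2 * π * g * ∫ s in Set.Ioi (0:ℝ),
        ((s + b1 ^ 2) * (s + b2 ^ 2) * (s + b3 ^ 2)) ^ (-(1:ℝ)/2))
      = -(4 * π * g / Real.sqrt (b1 ^ 2 - b3 ^ 2) *
          ellF (Real.arccos (b3 / b1)) ((b1 ^ 2 - b2 ^ 2) / (b1 ^ 2 - b3 ^ 2))) :=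
  stmt_2_general g b1 b2 b3 h21 h32 h3
end

section
/- With L the 8×8 real matrix described in the context, the characteristic polynomial of L satisfies det(λ·I₈ − L) = (λ⁴ − S₁λ² + (S₁² − P₁)/4)·(λ⁴ − S₂λ² + (S₂² − P₂)/4) for every λ ∈ ℂ, where S₁ = ℓ₁₅ℓ₅₁ + 2ℓ₁₆ℓ₅₂ + ℓ₂₆ℓ₆₂ and S₂ = ℓ₃₇ℓ₇₃ + 2ℓ₃₈ℓ₇₄ + ℓ₄₈ℓ₈₄. In particular, the eigenvalues of L are ±iω₁, ±iω₂, ±iω₃, ±iω₄ with ω₁ = (−i/√2)·√(S₁ − √P₁), ω₂ = (−i/√2)·√(S₁ + √P₁), ω₃ = (−i/√2)·√(S₂ − √P₂), ω₄ = (−i/√2)·√(S₂ + √P₂). -/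
/-!
After grouping the coordinates as `{1, 2, 5, 6}` and `{3, 4, 7, 8}`, `λ I - L` is block diagonal
with two blocks `[[λ I, -A], [-B, λ I]]`, where `A`, `B` are symmetric `2 × 2` matrices; such a
block has determinant `λ⁴ - tr (A B) λ² + det A det B`, and indeed `S = tr (A B)` and
`S² - P = 4 det A det B`. As a quadratic in `λ²` each factor has the roots `(S ± √P) / 2`,
which are exactly the squares of the `i ωⱼ`.
-/

open Matrix Complex

theorem quartic_eq_zero_iff {K : Type*} [Field K] [NeZero (2 : K)] {S P r w₁ w₂ x : K}
    (hr : r ^ 2 = P) (h₁ : w₁ ^ 2 = (S - r) / 2) (h₂ : w₂ ^ 2 = (S + r) / 2) :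
    x ^ 4 - S * x ^ 2 + (S ^ 2 - P) / 4 = 0 ↔
      x = w₁ ∨ x = -w₁ ∨ x = w₂ ∨ x = -w₂ := by
  have hfactor : x ^ 4 - S * x ^ 2 + (S ^ 2 - P) / 4 = (x ^ 2 - w₁ ^ 2) * (x ^ 2 - w₂ ^ 2) := by
    rw [h₁, h₂, ← hr, show (4 : K) = 2 ^ 2 by norm_num]; field_simp; ring
  rw [hfactor, mul_eq_zero, sub_eq_zero, sub_eq_zero, sq_eq_sq_iff_eq_or_eq_neg,
    sq_eq_sq_iff_eq_or_eq_neg, or_assoc]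

theorem cpow_one_div_two_sq (z : ℂ) : (z ^ ((1 : ℂ) / 2)) ^ 2 = z := by
  simp [cpow_ofNat_inv_pow]

theorem sq_I_mul_neg_I_div_sqrt_two_mul (z : ℂ) :
    (I * (-I / ((√2 : ℝ) : ℂ) * z ^ ((1 : ℂ) / 2))) ^ 2 = z / 2 := by
  have h2 : ((√2 : ℝ) : ℂ) ^ 2 = 2 := by norm_cast; simp
  rw [mul_pow, mul_pow, div_pow, cpow_one_div_two_sq, h2, neg_pow, I_sq]
  ring

theorem det_smul_one_sub_submatrix_equiv {R m n : Type*} [CommRing R] [Fintype m] [Fintype n]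
    [DecidableEq m] [DecidableEq n] (e : m ≃ n) (M : Matrix n n R) (c : R) :
    (c • 1 - M.submatrix e e).det = (c • 1 - M).det := by
  rw [← det_submatrix_equiv_self e (c • 1 - M)]
  congr 1
  ext i j
  simp [one_apply]

theorem det_smul_one_sub_fromBlocks_zero₁₂_zero₂₁ {R m n : Type*} [CommRing R]
    [Fintype m] [Fintype n] [DecidableEq m] [DecidableEq n]
    (X : Matrix m m R) (Y : Matrix n n R) (c : R) :
    (c • 1 - fromBlocks X 0 0 Y).det = (c • 1 - X).det * (c • 1 - Y).det := by
  rw [← fromBlocks_one, fromBlocks_smul, sub_eq_add_neg, fromBlocks_neg, fromBlocks_add]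
  simp only [smul_zero, neg_zero, add_zero, ← sub_eq_add_neg]
  exact det_fromBlocks_zero₁₂ _ _ _

theorem det_smul_one_sub_fromBlocks_zero_zero_fin_two {R : Type*} [CommRing R]
    (A B : Matrix (Fin 2) (Fin 2) R) (c : R) :
    (c • 1 - fromBlocks 0 A B 0).det = c ^ 4 - (A * B).trace * c ^ 2 + A.det * B.det := by
  have e₀ : finSumFinEquiv.symm (0 : Fin (2 + 2)) = Sum.inl 0 := rfl
  have e₁ : finSumFinEquiv.symm (1 : Fin (2 + 2)) = Sum.inl 1 := rfl
  have e₂ : finSumFinEquiv.symm (2 : Fin (2 + 2)) = Sum.inr 0 := rfl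
  have e₃ : finSumFinEquiv.symm (3 : Fin (2 + 2)) = Sum.inr 1 := rfl
  rw [← det_reindex_self finSumFinEquiv, det_succ_row_zero]
  simp [Fin.sum_univ_succ, Fin.succAbove, det_fin_three, det_fin_two, trace_fin_two, mul_apply,
    one_apply, e₀, e₁, e₂, e₃]
  ring

-- Sends the two diagonal blocks to the coordinates `{0, 1, 4, 5}` and `{2, 3, 6, 7}` of `Fin 8`.
def blockShuffle : (Fin 2 ⊕ Fin 2) ⊕ (Fin 2 ⊕ Fin 2) ≃ Fin 8 :=
  (Equiv.sumSumSumComm _ _ _ _).trans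
    ((Equiv.sumCongr finSumFinEquiv finSumFinEquiv).trans finSumFinEquiv)

theorem submatrix_blockShuffle {R : Type*} [Zero R]
    (a₁ b₁ c₁ a₂ b₂ c₂ d₁ e₁ f₁ d₂ e₂ f₂ : R) :
    (!![0, 0, 0, 0, a₁, b₁, 0, 0;
        0, 0, 0, 0, b₁, c₁, 0, 0;
        0, 0, 0, 0, 0, 0, a₂, b₂;
        0, 0, 0, 0, 0, 0, b₂, c₂;
        d₁, e₁, 0, 0, 0, 0, 0, 0;
        e₁, f₁, 0, 0, 0, 0, 0, 0;
        0, 0, d₂, e₂, 0, 0, 0, 0;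
        0, 0, e₂, f₂, 0, 0, 0, 0]).submatrix blockShuffle blockShuffle =
      fromBlocks (fromBlocks 0 !![a₁, b₁; b₁, c₁] !![d₁, e₁; e₁, f₁] 0) 0 0
        (fromBlocks 0 !![a₂, b₂; b₂, c₂] !![d₂, e₂; e₂, f₂] 0) := by
  ext ((i | i) | (i | i)) ((j | j) | (j | j)) <;> fin_cases i <;> fin_cases j <;> rfl

/-- The characteristic polynomial of the `8×8` linearisation matrix `L`
of the `S`-type Riemann ellipsoids factors as the product of two even quartics, and its
eigenvalues are `±iω₁, ±iω₂, ±iω₃, ±iω₄` with `ωⱼ = (−i/√2)·√(Sₖ ∓ √Pₖ)`. -/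
theorem stmt_16 (l15 l16 l26 l37 l38 l48 l51 l52 l62 l73 l74 l84 : ℝ)
    (L : Matrix (Fin 8) (Fin 8) ℝ)
    (hL : L = !![0,0,0,0,l15,l16,0,0;
                 0,0,0,0,l16,l26,0,0;
                 0,0,0,0,0,0,l37,l38;
                 0,0,0,0,0,0,l38,l48;
                 l51,l52,0,0,0,0,0,0;
                 l52,l62,0,0,0,0,0,0;
                 0,0,l73,l74,0,0,0,0;
                 0,0,l74,l84,0,0,0,0])
    (S1 S2 P1 P2 : ℝ)
    (hS1 : S1 = l15 * l51 + 2 * l16 * l52 + l26 * l62)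
    (hS2 : S2 = l37 * l73 + 2 * l38 * l74 + l48 * l84)
    (hP1 : P1 = l15 ^ 2 * l51 ^ 2 + 4 * l15 * l52 * (l16 * l51 + l26 * l52)
        - 2 * l15 * l26 * l51 * l62
        + l62 * (4 * l16 * (l16 * l51 + l26 * l52) + l26 ^ 2 * l62))
    (hP2 : P2 = l37 ^ 2 * l73 ^ 2 + 4 * l37 * l74 * (l38 * l73 + l48 * l74)
        - 2 * l37 * l48 * l73 * l84
        + l84 * (4 * l38 * (l38 * l73 + l48 * l74) + l48 ^ 2 * l84))
    (ω₁ ω₂ ω₃ ω₄ : ℂ)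
    (hω₁ : ω₁ = (-Complex.I / ((Real.sqrt 2 : ℝ) : ℂ)) *
      (((S1 : ℂ) - (P1 : ℂ) ^ ((1:ℂ)/2)) ^ ((1:ℂ)/2)))
    (hω₂ : ω₂ = (-Complex.I / ((Real.sqrt 2 : ℝ) : ℂ)) *
      (((S1 : ℂ) + (P1 : ℂ) ^ ((1:ℂ)/2)) ^ ((1:ℂ)/2)))
    (hω₃ : ω₃ = (-Complex.I / ((Real.sqrt 2 : ℝ) : ℂ)) *
      (((S2 : ℂ) - (P2 : ℂ) ^ ((1:ℂ)/2)) ^ ((1:ℂ)/2)))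
    (hω₄ : ω₄ = (-Complex.I / ((Real.sqrt 2 : ℝ) : ℂ)) *
      (((S2 : ℂ) + (P2 : ℂ) ^ ((1:ℂ)/2)) ^ ((1:ℂ)/2))) :
    (∀ lam : ℂ,
      (lam • (1 : Matrix (Fin 8) (Fin 8) ℂ) - L.map ((↑) : ℝ → ℂ)).det
        = (lam ^ 4 - (S1 : ℂ) * lam ^ 2 + ((S1 : ℂ) ^ 2 - (P1 : ℂ)) / 4) *
          (lam ^ 4 - (S2 : ℂ) * lam ^ 2 + ((S2 : ℂ) ^ 2 - (P2 : ℂ)) / 4)) ∧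
    (∀ lam : ℂ,
      (lam • (1 : Matrix (Fin 8) (Fin 8) ℂ) - L.map ((↑) : ℝ → ℂ)).det = 0 ↔
        lam = Complex.I * ω₁ ∨ lam = -(Complex.I * ω₁) ∨
        lam = Complex.I * ω₂ ∨ lam = -(Complex.I * ω₂) ∨
        lam = Complex.I * ω₃ ∨ lam = -(Complex.I * ω₃) ∨
        lam = Complex.I * ω₄ ∨ lam = -(Complex.I * ω₄)) := by
  subst hω₁ hω₂ hω₃ hω₄
  have hchar : ∀ lam : ℂ,
      (lam • (1 : Matrix (Fin 8) (Fin 8) ℂ) - L.map ((↑) : ℝ → ℂ)).det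
        = (lam ^ 4 - (S1 : ℂ) * lam ^ 2 + ((S1 : ℂ) ^ 2 - (P1 : ℂ)) / 4) *
          (lam ^ 4 - (S2 : ℂ) * lam ^ 2 + ((S2 : ℂ) ^ 2 - (P2 : ℂ)) / 4) := by
    intro lam
    rw [hL, ← det_smul_one_sub_submatrix_equiv blockShuffle, submatrix_map,
      submatrix_blockShuffle]
    simp only [fromBlocks_map, ofReal_zero, Matrix.map_zero,
      det_smul_one_sub_fromBlocks_zero₁₂_zero₂₁, det_smul_one_sub_fromBlocks_zero_zero_fin_two,
      trace_fin_two, det_fin_two, mul_apply, Fin.sum_univ_two, map_apply, of_apply, cons_val',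
      cons_val_fin_one, cons_val_zero, cons_val_one,
      hS1, hS2, hP1, hP2]
    push_cast
    ring
  refine ⟨hchar, fun lam => ?_⟩
  rw [hchar, mul_eq_zero,
    quartic_eq_zero_iff (cpow_one_div_two_sq _) (sq_I_mul_neg_I_div_sqrt_two_mul _)
      (sq_I_mul_neg_I_div_sqrt_two_mul _),
    quartic_eq_zero_iff (cpow_one_div_two_sq _) (sq_I_mul_neg_I_div_sqrt_two_mul _)
      (sq_I_mul_neg_I_div_sqrt_two_mul _)]
  simp only [or_assoc]
end

section
/- With L_I the 6×6 real matrix described in the context, the characteristic polynomial of L_I satisfies det(λ·I₆ − L_I) = (λ² − ℓ₃₆ℓ₆₃)·(λ⁴ − S̄λ² + (S̄² − P̄)/4) for every λ ∈ ℂ, where S̄ = ℓ₁₄ℓ₄₁ + 2ℓ₁₅ℓ₄₂ + ℓ₂₅ℓ₅₂. In particular, the eigenvalues of L_I are ±iω₁, ±iω₂, ±iω₃ with ω₁ = (−i/√2)·√(S̄ − √P̄), ω₂ = (−i/√2)·√(S̄ + √P̄), ω₃ = i·√(ℓ₃₆ℓ₆₃). -/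
open Matrix Complex

/-!
Permuting the coordinates to `(1, 2, 4, 5 | 3, 6)` makes `L_I` block diagonal, with blocks
`[[0, A], [B, 0]]` for `A = [[ℓ₁₄, ℓ₁₅], [ℓ₁₅, ℓ₂₅]]`, `B = [[ℓ₄₁, ℓ₄₂], [ℓ₄₂, ℓ₅₂]]`, and
`[[0, ℓ₃₆], [ℓ₆₃, 0]]`. The first block contributes `det (λ² - AB) = λ⁴ - tr(AB) λ² + det A det B`,
where `tr(AB) = S̄` and `4 det A det B = S̄² - P̄`; the second contributes `λ² - ℓ₃₆ℓ₆₃`.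
As a quadratic in `λ²` the quartic has roots `(S̄ ± √P̄)/2`, which are `(iω₁)²` and `(iω₂)²`,
while `ℓ₃₆ℓ₆₃ = (iω₃)²`.
-/

theorem det_smul_one_sub_offdiag_sym_blocks {R : Type*} [CommRing R] (a b c d e f g h x : R) :
    (x • (1 : Matrix (Fin 6) (Fin 6) R) - !![0,0,0,a,b,0;
                                             0,0,0,b,c,0;
                                             0,0,0,0,0,d;
                                             e,f,0,0,0,0;
                                             f,g,0,0,0,0;
                                             0,0,h,0,0,0]).det
      = (x ^ 2 - d * h) *
          (x ^ 4 - (a * e + 2 * b * f + c * g) * x ^ 2 + (a * c - b ^ 2) * (e * g - f ^ 2)) := by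
  simp [det_succ_row_zero, Fin.sum_univ_succ, Fin.succAbove, one_apply]
  ring

theorem cpow_one_half_sq (z : ℂ) : (z ^ (1 / 2 : ℂ)) ^ 2 = z := by
  rw [one_div, cpow_ofNat_inv_pow]

theorem I_mul_neg_I_div_sqrt_two_mul_sq (w : ℂ) :
    (I * (-I / ((√2 : ℝ) : ℂ) * w)) ^ 2 = w ^ 2 / 2 := by
  have h2 : ((√2 : ℝ) : ℂ) ^ 2 = 2 := by
    rw [← ofReal_pow, Real.sq_sqrt zero_le_two, ofReal_ofNat]
  calc (I * (-I / ((√2 : ℝ) : ℂ) * w)) ^ 2 = (-(I * I)) ^ 2 * w ^ 2 / ((√2 : ℝ) : ℂ) ^ 2 := by ring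
    _ = w ^ 2 / 2 := by rw [I_mul_I, h2]; ring

theorem mul_mul_sq_sub_sq_eq_zero_iff {R : Type*} [CommRing R] [NoZeroDivisors R] (x u v w : R) :
    (x ^ 2 - u ^ 2) * (x ^ 2 - v ^ 2) * (x ^ 2 - w ^ 2) = 0 ↔
      x = u ∨ x = -u ∨ x = v ∨ x = -v ∨ x = w ∨ x = -w := by
  simp only [mul_eq_zero, sub_eq_zero, sq_eq_sq_iff_eq_or_eq_neg, or_assoc]

/-- The characteristic polynomial of the `6×6` linearisation matrix
`L_I` of the irrotational ellipsoids factors as `(λ² − ℓ₃₆ℓ₆₃)(λ⁴ − S̄λ² + (S̄² − P̄)/4)`,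
and its eigenvalues are `±iω₁, ±iω₂, ±iω₃`. -/
theorem stmt_17 (l14 l15 l25 l36 l41 l42 l52 l63 : ℝ)
    (LI : Matrix (Fin 6) (Fin 6) ℝ)
    (hLI : LI = !![0,0,0,l14,l15,0;
                   0,0,0,l15,l25,0;
                   0,0,0,0,0,l36;
                   l41,l42,0,0,0,0;
                   l42,l52,0,0,0,0;
                   0,0,l63,0,0,0])
    (Sb Pb : ℝ)
    (hSb : Sb = l14 * l41 + 2 * l15 * l42 + l25 * l52)
    (hPb : Pb = l14 ^ 2 * l41 ^ 2 + 4 * l14 * l42 * (l15 * l41 + l25 * l42)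
        - 2 * l14 * l25 * l41 * l52
        + l52 * (4 * l15 * (l15 * l41 + l25 * l42) + l25 ^ 2 * l52))
    (ω₁ ω₂ ω₃ : ℂ)
    (hω₁ : ω₁ = (-Complex.I / ((Real.sqrt 2 : ℝ) : ℂ)) *
      (((Sb : ℂ) - (Pb : ℂ) ^ ((1:ℂ)/2)) ^ ((1:ℂ)/2)))
    (hω₂ : ω₂ = (-Complex.I / ((Real.sqrt 2 : ℝ) : ℂ)) *
      (((Sb : ℂ) + (Pb : ℂ) ^ ((1:ℂ)/2)) ^ ((1:ℂ)/2)))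
    (hω₃ : ω₃ = Complex.I * (((l36 * l63 : ℝ) : ℂ) ^ ((1:ℂ)/2))) :
    (∀ lam : ℂ,
      (lam • (1 : Matrix (Fin 6) (Fin 6) ℂ) - LI.map ((↑) : ℝ → ℂ)).det
        = (lam ^ 2 - ((l36 * l63 : ℝ) : ℂ)) *
          (lam ^ 4 - (Sb : ℂ) * lam ^ 2 + ((Sb : ℂ) ^ 2 - (Pb : ℂ)) / 4)) ∧
    (∀ lam : ℂ,
      (lam • (1 : Matrix (Fin 6) (Fin 6) ℂ) - LI.map ((↑) : ℝ → ℂ)).det = 0 ↔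
        lam = Complex.I * ω₁ ∨ lam = -(Complex.I * ω₁) ∨
        lam = Complex.I * ω₂ ∨ lam = -(Complex.I * ω₂) ∨
        lam = Complex.I * ω₃ ∨ lam = -(Complex.I * ω₃)) := by
  have hLIC : LI.map ((↑) : ℝ → ℂ) = !![0,0,0,(l14 : ℂ),l15,0;
                                        0,0,0,l15,l25,0;
                                        0,0,0,0,0,l36;
                                        l41,l42,0,0,0,0;
                                        l42,l52,0,0,0,0;
                                        0,0,l63,0,0,0] := by
    subst hLI
    ext i j
    fin_cases i <;> fin_cases j <;> simp
  have hdet : ∀ lam : ℂ,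
      (lam • (1 : Matrix (Fin 6) (Fin 6) ℂ) - LI.map ((↑) : ℝ → ℂ)).det
        = (lam ^ 2 - ((l36 * l63 : ℝ) : ℂ)) *
          (lam ^ 4 - (Sb : ℂ) * lam ^ 2 + ((Sb : ℂ) ^ 2 - (Pb : ℂ)) / 4) := fun lam => by
    rw [hLIC, det_smul_one_sub_offdiag_sym_blocks]
    push_cast [hSb, hPb]
    ring
  refine ⟨hdet, fun lam => ?_⟩
  have hfactor : (lam ^ 2 - ((l36 * l63 : ℝ) : ℂ)) *
        (lam ^ 4 - (Sb : ℂ) * lam ^ 2 + ((Sb : ℂ) ^ 2 - (Pb : ℂ)) / 4)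
      = (lam ^ 2 - (I * ω₁) ^ 2) * (lam ^ 2 - (I * ω₂) ^ 2) * (lam ^ 2 - (I * ω₃) ^ 2) := by
    have hω₃sq : (I * ω₃) ^ 2 = ((l36 * l63 : ℝ) : ℂ) := by
      rw [hω₃, mul_pow, mul_pow, cpow_one_half_sq, I_sq]
      ring
    rw [hω₁, hω₂, I_mul_neg_I_div_sqrt_two_mul_sq, I_mul_neg_I_div_sqrt_two_mul_sq,
      cpow_one_half_sq, cpow_one_half_sq, hω₃sq]
    linear_combination (lam ^ 2 - ((l36 * l63 : ℝ) : ℂ)) / 4 * cpow_one_half_sq (Pb : ℂ)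
  rw [hdet, hfactor, mul_mul_sq_sub_sq_eq_zero_iff]
end
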